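/- Let p ∈ [1,∞), q with 1/p + 1/q = 1, and consider the family of continuous linear functionals on W_p^1([a,b],ℂ) given by B_ε(y) := α(ε) (y(t_ε) − y(t₀)), where t_ε ∈ [a,b], t_ε → t₀, and |α(ε)|·|t_ε − t₀|^{1/q} ≤ M for all small ε > 0. Then sup over small ε of the operator norms ‖B_ε‖ is finite, and B_ε(y) → 0 as ε → 0+ for every y ∈ W_p^1([a,b],ℂ). -/

import Mathlib

/-!
Write `B_ε(y) = α(ε) (y(t_ε) - y(t₀))`. By the fundamental theorem of calculus and Hölder's
inequality against the constant `1`,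
`|y(t_ε) - y(t₀)| ≤ |t_ε - t₀|^{1/q} |∫_{t₀}^{t_ε} |y'|^p|^{1/p}`,
so `|B_ε(y)| ≤ M |∫_{t₀}^{t_ε} |y'|^p|^{1/p}`. The integral is at most `‖y‖^p`, which gives the
uniform bound, and it tends to `0` as `t_ε → t₀` by continuity of the primitive, which gives
pointwise convergence without any density argument.
-/

open Filter Topology MeasureTheory intervalIntegral Set

theorem integral_norm_le_measureReal_univ_rpow_mul {α E : Type*} [MeasurableSpace α]
    [NormedAddCommGroup E] {μ : Measure α} [IsFiniteMeasure μ] {f : α → E} {p : ℝ}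
    (hp : 1 ≤ p) (hf : AEStronglyMeasurable f μ) (hfp : Integrable (fun x => ‖f x‖ ^ p) μ) :
    ∫ x, ‖f x‖ ∂μ ≤ μ.real univ ^ (1 - 1 / p) * (∫ x, ‖f x‖ ^ p ∂μ) ^ (1 / p) := by
  rcases hp.eq_or_lt with rfl | hp1
  · simp
  have hpq : p.HolderConjugate p.conjExponent := .conjExponent hp1
  have hfLp : MemLp f (ENNReal.ofReal p) μ := by
    rwa [← integrable_norm_rpow_iff hf (by simpa using hpq.pos) ENNReal.ofReal_ne_top,
      ENNReal.toReal_ofReal hpq.nonneg]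
  have := integral_mul_norm_le_Lp_mul_Lq hpq hfLp.norm (memLp_const (1 : ℝ))
  rw [one_div p, hpq.one_sub_inv, mul_comm]
  simpa using this

variable {E : Type*} [NormedAddCommGroup E] [NormedSpace ℝ E]

theorem norm_sub_le_rpow_mul_integral_norm_rpow [CompleteSpace E] {f f' : ℝ → E} {p c d : ℝ} (hp : 1 ≤ p)
    (hcd : c ≤ d) (hcont : ContinuousOn f (Icc c d))
    (hderiv : ∀ x ∈ Ioo c d, HasDerivAt f (f' x) x)
    (hint : IntervalIntegrable (fun x => ‖f' x‖ ^ p) volume c d) :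
    ‖f d - f c‖ ≤ (d - c) ^ (1 - 1 / p) * (∫ x in c..d, ‖f' x‖ ^ p) ^ (1 / p) := by
  have hmeas : AEStronglyMeasurable f' (volume.restrict (Ioc c d)) := by
    rw [← Measure.restrict_congr_set Ioo_ae_eq_Ioc]
    exact (aestronglyMeasurable_deriv f _).congr
      ((ae_restrict_mem measurableSet_Ioo).mono fun x hx => (hderiv x hx).deriv)
  have hintp := (intervalIntegrable_iff_integrableOn_Ioc_of_le hcd).1 hint
  have hf'int : IntervalIntegrable f' volume c d := by
    rw [intervalIntegrable_iff_integrableOn_Ioc_of_le hcd, IntegrableOn,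
      ← integrable_norm_iff hmeas]
    simpa using integrable_norm_rpow_of_le hmeas zero_le_one (by linarith) hp hintp
  calc ‖f d - f c‖ = ‖∫ x in c..d, f' x‖ := by
        rw [integral_eq_sub_of_hasDerivAt_of_le hcd hcont hderiv hf'int]
    _ ≤ ∫ x in c..d, ‖f' x‖ := norm_integral_le_integral_norm hcd
    _ ≤ _ := by
      rw [integral_of_le hcd, integral_of_le hcd]
      simpa [hcd] using integral_norm_le_measureReal_univ_rpow_mul hp hmeas hintp

theorem norm_sub_le_rpow_mul_abs_integral_norm_rpow [CompleteSpace E] {f f' : ℝ → E}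
    {p a b u v : ℝ} (hp : 1 ≤ p) (hderiv : ∀ x ∈ Icc a b, HasDerivWithinAt f (f' x) (Icc a b) x)
    (hint : IntervalIntegrable (fun x => ‖f' x‖ ^ p) volume a b)
    (hu : u ∈ Icc a b) (hv : v ∈ Icc a b) :
    ‖f v - f u‖ ≤ |v - u| ^ (1 - 1 / p) * |∫ x in u..v, ‖f' x‖ ^ p| ^ (1 / p) := by
  wlog huv : u ≤ v generalizing u v
  · have := this hv hu (le_of_not_ge huv)
    rwa [norm_sub_rev, abs_sub_comm, integral_symm, abs_neg] at this
  have hsub : Icc u v ⊆ Icc a b := Icc_subset_Icc hu.1 hv.2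
  rw [abs_of_nonneg (sub_nonneg.2 huv),
    abs_of_nonneg (integral_nonneg huv fun x _ => by positivity)]
  exact norm_sub_le_rpow_mul_integral_norm_rpow hp huv
    (fun x hx => (hderiv x (hsub hx)).continuousWithinAt.mono hsub)
    (fun x hx => (hderiv x (hsub (Ioo_subset_Icc_self hx))).hasDerivAt
      (Icc_mem_nhds (hu.1.trans_lt hx.1) (hx.2.trans_le hv.2)))
    (hint.mono_set (uIcc_subset_uIcc (Icc_subset_uIcc hu) (Icc_subset_uIcc hv)))

theorem abs_integral_le_integral_of_nonneg_of_mem_Icc {g : ℝ → ℝ} {a b u v : ℝ}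
    (hg : ∀ x, 0 ≤ g x) (hint : IntervalIntegrable g volume a b)
    (hu : u ∈ Icc a b) (hv : v ∈ Icc a b) :
    |∫ x in u..v, g x| ≤ ∫ x in a..b, g x := by
  wlog huv : u ≤ v generalizing u v
  · have := this hv hu (le_of_not_ge huv)
    rwa [integral_symm, abs_neg] at this
  rw [abs_of_nonneg (integral_nonneg huv fun x _ => hg x)]
  exact integral_mono_interval hu.1 huv hv.2 (.of_forall hg) hint

theorem tendsto_integral_nhdsWithin_Icc {g : ℝ → E} {a b u : ℝ}
    (hint : IntervalIntegrable g volume a b) (hu : u ∈ Icc a b) :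
    Tendsto (fun x => ∫ s in u..x, g s) (𝓝[Icc a b] u) (𝓝 0) := by
  have hab : a ≤ b := hu.1.trans hu.2
  rw [← uIcc_of_le hab] at hu ⊢
  simpa using (continuousOn_primitive_interval' hint hu u hu).tendsto

theorem stmt_14_general (p : ℝ) (hp : 1 ≤ p) (a b : ℝ)
    (t₀ : ℝ) (ht₀ : t₀ ∈ Set.Icc a b) (t : ℝ → ℝ) (α : ℝ → ℂ)
    (htmem : ∀ᶠ ε in 𝓝[>] (0:ℝ), t ε ∈ Set.Icc a b)
    (htconv : Tendsto t (𝓝[>] (0:ℝ)) (𝓝 t₀))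
    (M : ℝ) (hM : ∀ᶠ ε in 𝓝[>] (0:ℝ), ‖α ε‖ * |t ε - t₀| ^ (1 - 1 / p) ≤ M) :
    (∃ K : ℝ, ∀ᶠ ε in 𝓝[>] (0:ℝ), ∀ y y' : ℝ → ℂ,
      (∀ s ∈ Set.Icc a b, HasDerivWithinAt y (y' s) (Set.Icc a b) s) →
      IntervalIntegrable (fun s => ‖y s‖ ^ p) volume a b →
      IntervalIntegrable (fun s => ‖y' s‖ ^ p) volume a b →
      ‖α ε * (y (t ε) - y t₀)‖ ≤
        K * ((∫ s in a..b, ‖y s‖ ^ p) + ∫ s in a..b, ‖y' s‖ ^ p) ^ (1 / p)) ∧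
    (∀ y y' : ℝ → ℂ,
      (∀ s ∈ Set.Icc a b, HasDerivWithinAt y (y' s) (Set.Icc a b) s) →
      IntervalIntegrable (fun s => ‖y s‖ ^ p) volume a b →
      IntervalIntegrable (fun s => ‖y' s‖ ^ p) volume a b →
      Tendsto (fun ε => α ε * (y (t ε) - y t₀)) (𝓝[>] (0:ℝ)) (𝓝 0)) := by
  have hp0 : 0 < p := by linarith
  have hB : ∀ᶠ ε in 𝓝[>] (0:ℝ), ∀ y y' : ℝ → ℂ,
      (∀ s ∈ Icc a b, HasDerivWithinAt y (y' s) (Icc a b) s) →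
      IntervalIntegrable (fun s => ‖y' s‖ ^ p) volume a b →
      ‖α ε * (y (t ε) - y t₀)‖ ≤ max M 0 * |∫ s in t₀..t ε, ‖y' s‖ ^ p| ^ (1 / p) := by
    filter_upwards [htmem, hM] with ε htε hMε y y' hy hy'
    rw [norm_mul]
    calc ‖α ε‖ * ‖y (t ε) - y t₀‖
        ≤ ‖α ε‖ * (|t ε - t₀| ^ (1 - 1 / p) * |∫ s in t₀..t ε, ‖y' s‖ ^ p| ^ (1 / p)) := by
          gcongr
          exact norm_sub_le_rpow_mul_abs_integral_norm_rpow hp hy hy' ht₀ htε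
      _ = ‖α ε‖ * |t ε - t₀| ^ (1 - 1 / p) * |∫ s in t₀..t ε, ‖y' s‖ ^ p| ^ (1 / p) :=
          (mul_assoc _ _ _).symm
      _ ≤ _ := by gcongr; exact hMε.trans (le_max_left _ _)
  refine ⟨⟨max M 0, ?_⟩, fun y y' hy _ hy' => ?_⟩
  · filter_upwards [hB, htmem] with ε hBε htε y y' hy hyint hy'int
    refine (hBε y y' hy hy'int).trans ?_
    gcongr
    calc |∫ s in t₀..t ε, ‖y' s‖ ^ p| ≤ ∫ s in a..b, ‖y' s‖ ^ p :=
          abs_integral_le_integral_of_nonneg_of_mem_Icc (fun s => by positivity) hy'int ht₀ htε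
      _ ≤ _ := le_add_of_nonneg_left
          (integral_nonneg (ht₀.1.trans ht₀.2) fun s _ => by positivity)
  · refine squeeze_zero_norm' (hB.mono fun ε h => h y y' hy hy') ?_
    have := (tendsto_integral_nhdsWithin_Icc hy' ht₀).comp
      (tendsto_nhdsWithin_iff.2 ⟨htconv, htmem⟩)
    simpa [Function.comp_def, Real.zero_rpow, (inv_pos.2 hp0).ne'] using
      (this.abs.rpow_const (p := 1 / p) (Or.inr (by positivity))).const_mul (max M 0)

/-- The family of functionals `B_ε(y) = α(ε)(y(t_ε) − y(t₀))` on `W_p^1([a,b],ℂ)`: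
if `t_ε → t₀` and `‖α(ε)‖ |t_ε − t₀|^{1/q} ≤ M` (with `1/q = 1 − 1/p`), then the
operator norms are uniformly bounded and `B_ε(y) → 0` for every `y ∈ W_p^1`.
Elements of `W_p^1` are encoded as pairs `(y, y')` with `y'` the derivative of `y`
on `[a,b]` and `‖y‖^p, ‖y'‖^p` integrable. -/
theorem stmt_14 (p : ℝ) (hp : 1 ≤ p) (a b : ℝ) (hab : a < b)
    (t₀ : ℝ) (ht₀ : t₀ ∈ Set.Icc a b) (t : ℝ → ℝ) (α : ℝ → ℂ)
    (htmem : ∀ᶠ ε in 𝓝[>] (0:ℝ), t ε ∈ Set.Icc a b)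
    (htconv : Tendsto t (𝓝[>] (0:ℝ)) (𝓝 t₀))
    (M : ℝ) (hM : ∀ᶠ ε in 𝓝[>] (0:ℝ), ‖α ε‖ * |t ε - t₀| ^ (1 - 1 / p) ≤ M) :
    (∃ K : ℝ, ∀ᶠ ε in 𝓝[>] (0:ℝ), ∀ y y' : ℝ → ℂ,
      (∀ s ∈ Set.Icc a b, HasDerivWithinAt y (y' s) (Set.Icc a b) s) →
      IntervalIntegrable (fun s => ‖y s‖ ^ p) volume a b →
      IntervalIntegrable (fun s => ‖y' s‖ ^ p) volume a b →
      ‖α ε * (y (t ε) - y t₀)‖ ≤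
        K * ((∫ s in a..b, ‖y s‖ ^ p) + ∫ s in a..b, ‖y' s‖ ^ p) ^ (1 / p)) ∧
    (∀ y y' : ℝ → ℂ,
      (∀ s ∈ Set.Icc a b, HasDerivWithinAt y (y' s) (Set.Icc a b) s) →
      IntervalIntegrable (fun s => ‖y s‖ ^ p) volume a b →
      IntervalIntegrable (fun s => ‖y' s‖ ^ p) volume a b →
      Tendsto (fun ε => α ε * (y (t ε) - y t₀)) (𝓝[>] (0:ℝ)) (𝓝 0)) :=
  stmt_14_general p hp a b t₀ ht₀ t α htmem htconv M hM
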